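/- Let c₁, c₂, c₃ be real numbers with C = max(|c₁|,|c₂|,|c₃|) ≤ 1. For all unit vectors z, z⁰, z¹ in ℝ³, setting φ₀ = (c₁z₁z₁⁰)²+(c₂z₂z₂⁰)²+(c₃z₃z₃⁰)² and φ₁ = (c₁z₁z₁¹)²+(c₂z₂z₂¹)²+(c₃z₃z₃¹)², one has (1/4)·[H(√φ₀) + H(√φ₁)] ≤ (1/2)·H(C), and equality is attained for a suitable choice of unit vectors. Hence the maximum of (1/4)·[H(√φ₀)+H(√φ₁)] over all triples of unit vectors equals (1/2)·H(C). -/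

import Mathlib

/-!
In bits, `H(x) = 2 - 2 h((1 + x) / 2)` where `h` is the binary entropy, so `H` increases on
`[0, 1]`. Since `|cᵢ| ≤ C` and every coordinate of a unit vector has square at most `1`, we get
`φ ≤ C² (z₁² + z₂² + z₃²) = C²`, hence `H(√φ) ≤ H(C)` for each of the two terms. Equality holds
for `z = z⁰ = z¹` the basis vector of a coordinate where `|cᵢ|` is maximal.
-/

/-- `H(x) = (1+x)·log₂(1+x) + (1−x)·log₂(1−x)`. -/
noncomputable def Hf (x : ℝ) : ℝ :=
  (1 + x) * Real.logb 2 (1 + x) + (1 - x) * Real.logb 2 (1 - x)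

/-- A unit vector in `ℝ³`: a triple with `z₁²+z₂²+z₃² = 1`. -/
def IsUnitVec (v : ℝ × ℝ × ℝ) : Prop := v.1 ^ 2 + v.2.1 ^ 2 + v.2.2 ^ 2 = 1

/-- `φ = (c₁z₁w₁)² + (c₂z₂w₂)² + (c₃z₃w₃)²`. -/
noncomputable def phi (c₁ c₂ c₃ : ℝ) (z w : ℝ × ℝ × ℝ) : ℝ :=
  (c₁ * z.1 * w.1) ^ 2 + (c₂ * z.2.1 * w.2.1) ^ 2 + (c₃ * z.2.2 * w.2.2) ^ 2

open Real

lemma two_mul_mul_log_two_mul (q : ℝ) : 2 * q * log (2 * q) = 2 * q * log 2 + 2 * q * log q := by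
  rcases eq_or_ne q 0 with rfl | hq
  · simp
  · rw [log_mul two_ne_zero hq]
    ring

lemma Hf_eq_two_sub_binEntropy (x : ℝ) : Hf x = 2 - 2 * binEntropy ((1 + x) / 2) / log 2 := by
  have hlog2 : log 2 ≠ 0 := (log_pos one_lt_two).ne'
  have hplus := two_mul_mul_log_two_mul ((1 + x) / 2)
  have hminus := two_mul_mul_log_two_mul ((1 - x) / 2)
  rw [show 2 * ((1 + x) / 2) = 1 + x by ring] at hplus
  rw [show 2 * ((1 - x) / 2) = 1 - x by ring] at hminus
  rw [Hf, logb, logb, binEntropy_eq_negMulLog_add_negMulLog_one_sub, negMulLog, negMulLog,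
    show 1 - (1 + x) / 2 = (1 - x) / 2 by ring]
  field_simp
  linear_combination hplus + hminus

lemma Hf_strictMonoOn : StrictMonoOn Hf (Set.Icc 0 1) := by
  intro x hx y hy hxy
  have hmaps : ∀ t ∈ Set.Icc (0 : ℝ) 1, (1 + t) / 2 ∈ Set.Icc (2⁻¹ : ℝ) 1 := fun t ht =>
    ⟨by linarith [ht.1], by linarith [ht.2]⟩
  have hent := binEntropy_strictAntiOn (hmaps x hx) (hmaps y hy) (by linarith)
  rw [Hf_eq_two_sub_binEntropy, Hf_eq_two_sub_binEntropy]
  have hlog2 : 0 < log 2 := log_pos one_lt_two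
  gcongr

lemma sq_le_one_of_isUnitVec {w : ℝ × ℝ × ℝ} (hw : IsUnitVec w) :
    w.1 ^ 2 ≤ 1 ∧ w.2.1 ^ 2 ≤ 1 ∧ w.2.2 ^ 2 ≤ 1 := by
  unfold IsUnitVec at hw
  refine ⟨?_, ?_, ?_⟩ <;> nlinarith [sq_nonneg w.1, sq_nonneg w.2.1, sq_nonneg w.2.2]

lemma sq_mul_mul_le {c C z w : ℝ} (hc : |c| ≤ C) (hw : w ^ 2 ≤ 1) :
    (c * z * w) ^ 2 ≤ C ^ 2 * z ^ 2 :=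
  calc (c * z * w) ^ 2 = |c| ^ 2 * z ^ 2 * w ^ 2 := by rw [sq_abs]; ring
    _ ≤ C ^ 2 * z ^ 2 * 1 := by gcongr
    _ = C ^ 2 * z ^ 2 := mul_one _

lemma phi_le_sq {c₁ c₂ c₃ C : ℝ} (h₁ : |c₁| ≤ C) (h₂ : |c₂| ≤ C) (h₃ : |c₃| ≤ C)
    {z w : ℝ × ℝ × ℝ} (hz : IsUnitVec z) (hw : IsUnitVec w) :
    phi c₁ c₂ c₃ z w ≤ C ^ 2 := by
  obtain ⟨hw₁, hw₂, hw₃⟩ := sq_le_one_of_isUnitVec hw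
  calc phi c₁ c₂ c₃ z w ≤ C ^ 2 * z.1 ^ 2 + C ^ 2 * z.2.1 ^ 2 + C ^ 2 * z.2.2 ^ 2 :=
        add_le_add_three (sq_mul_mul_le h₁ hw₁) (sq_mul_mul_le h₂ hw₂) (sq_mul_mul_le h₃ hw₃)
    _ = C ^ 2 := by rw [← mul_add, ← mul_add, hz, mul_one]

lemma exists_isUnitVec_phi_self_eq (c₁ c₂ c₃ : ℝ) :
    ∃ v, IsUnitVec v ∧ phi c₁ c₂ c₃ v v = max |c₁| (max |c₂| |c₃|) ^ 2 := by
  rcases max_choice |c₁| (max |c₂| |c₃|) with h | h <;> rw [h]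
  · exact ⟨(1, 0, 0), by simp [IsUnitVec], by simp [phi]⟩
  rcases max_choice |c₂| |c₃| with h' | h' <;> rw [h']
  · exact ⟨(0, 1, 0), by simp [IsUnitVec], by simp [phi]⟩
  · exact ⟨(0, 0, 1), by simp [IsUnitVec], by simp [phi]⟩

/-- With `C = max(|c₁|,|c₂|,|c₃|) ≤ 1`: `(1/4)[H(√φ₀)+H(√φ₁)] ≤ (1/2)H(C)` for all triples of
unit vectors, with equality attained; hence the maximum equals `(1/2)H(C)`. -/
theorem stmt_9 (c₁ c₂ c₃ C : ℝ) (hC : C = max |c₁| (max |c₂| |c₃|)) (hC1 : C ≤ 1) :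
    (∀ z z0 z1 : ℝ × ℝ × ℝ, IsUnitVec z → IsUnitVec z0 → IsUnitVec z1 →
        (1 / 4) * (Hf (Real.sqrt (phi c₁ c₂ c₃ z z0)) + Hf (Real.sqrt (phi c₁ c₂ c₃ z z1)))
          ≤ (1 / 2) * Hf C) ∧
    (∃ z z0 z1 : ℝ × ℝ × ℝ, IsUnitVec z ∧ IsUnitVec z0 ∧ IsUnitVec z1 ∧
        (1 / 4) * (Hf (Real.sqrt (phi c₁ c₂ c₃ z z0)) + Hf (Real.sqrt (phi c₁ c₂ c₃ z z1)))
          = (1 / 2) * Hf C) ∧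
    IsGreatest {y : ℝ | ∃ z z0 z1 : ℝ × ℝ × ℝ,
        IsUnitVec z ∧ IsUnitVec z0 ∧ IsUnitVec z1 ∧
        y = (1 / 4) * (Hf (Real.sqrt (phi c₁ c₂ c₃ z z0))
              + Hf (Real.sqrt (phi c₁ c₂ c₃ z z1)))} ((1 / 2) * Hf C) := by
  obtain ⟨h₁, h₂, h₃⟩ : |c₁| ≤ C ∧ |c₂| ≤ C ∧ |c₃| ≤ C := by simp [hC]
  have hC0 : 0 ≤ C := (abs_nonneg c₁).trans h₁
  have hterm : ∀ z w, IsUnitVec z → IsUnitVec w → Hf √(phi c₁ c₂ c₃ z w) ≤ Hf C :=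
    fun z w hz hw =>
      have hsqrt : √(phi c₁ c₂ c₃ z w) ≤ C := (sqrt_le_left hC0).2 (phi_le_sq h₁ h₂ h₃ hz hw)
      Hf_strictMonoOn.monotoneOn ⟨sqrt_nonneg _, hsqrt.trans hC1⟩ ⟨hC0, hC1⟩ hsqrt
  have hbound : ∀ z z0 z1 : ℝ × ℝ × ℝ, IsUnitVec z → IsUnitVec z0 → IsUnitVec z1 →
      (1 / 4) * (Hf √(phi c₁ c₂ c₃ z z0) + Hf √(phi c₁ c₂ c₃ z z1)) ≤ (1 / 2) * Hf C :=
    fun z z0 z1 hz hz0 hz1 => by linarith [hterm z z0 hz hz0, hterm z z1 hz hz1]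
  obtain ⟨v, hv, hphi⟩ := exists_isUnitVec_phi_self_eq c₁ c₂ c₃
  have hattained :
      (1 / 4) * (Hf √(phi c₁ c₂ c₃ v v) + Hf √(phi c₁ c₂ c₃ v v)) = (1 / 2) * Hf C := by
    rw [hphi, ← hC, sqrt_sq hC0]
    ring
  refine ⟨hbound, ⟨v, v, v, hv, hv, hv, hattained⟩, ⟨v, v, v, hv, hv, hv, hattained.symm⟩, ?_⟩
  rintro y ⟨z, z0, z1, hz, hz0, hz1, rfl⟩
  exact hbound z z0 z1 hz hz0 hz1
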